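/- Let n ≥ 2 be an integer and define d : ℝ^n → ℝ by d(x1,...,xn) = max_{1≤i≤n−1} (x_{(i+1)} − x_{(i)}), the largest gap between consecutive values when the arguments are sorted increasingly. Then d is an n-distance on ℝ whose best constant is 2/n: for all x1,...,xn,z ∈ ℝ one has d(x1,...,xn) ≤ (2/n) · Σ_{i=1}^n d(x1,...,xn)_i^z, and equality holds with a nonconstant tuple whenever x1 < x2 = x3 = ⋯ = xn and z = (x1 + x2)/2. -/

import Mathlib

namespace LGD

variable {n : ℕ}

def gs (x : Fin n → ℝ) : Set ℝ :=
  {t : ℝ | ∃ i : Fin n, ∃ hi : (i : ℕ) + 1 < n,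
    t = (x ∘ Tuple.sort x) ⟨(i : ℕ) + 1, hi⟩ - (x ∘ Tuple.sort x) i}

lemma gs_finite (x : Fin n → ℝ) : (gs x).Finite := by
  apply Set.Finite.subset (Set.finite_range
    (fun i : Fin n => if hi : (i : ℕ) + 1 < n then
      (x ∘ Tuple.sort x) ⟨(i : ℕ) + 1, hi⟩ - (x ∘ Tuple.sort x) i else 0))
  rintro t ⟨i, hi, rfl⟩
  exact ⟨i, by simp only [dif_pos hi]⟩

lemma gs_nonempty (hn : 2 ≤ n) (x : Fin n → ℝ) : (gs x).Nonempty := by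
  have h1 : (0 : ℕ) + 1 < n := by omega
  exact ⟨_, ⟨⟨0, by omega⟩, h1, rfl⟩⟩

lemma gs_nonneg (x : Fin n → ℝ) {t : ℝ} (ht : t ∈ gs x) : 0 ≤ t := by
  obtain ⟨i, hi, rfl⟩ := ht
  have := Tuple.monotone_sort x
  have h := this (show i ≤ ⟨(i : ℕ) + 1, hi⟩ from by simp [Fin.le_def])
  simpa using h

lemma sSup_gs_mem (hn : 2 ≤ n) (x : Fin n → ℝ) : sSup (gs x) ∈ gs x :=
  (gs_nonempty hn x).csSup_mem (gs_finite x)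

lemma sSup_gs_nonneg (hn : 2 ≤ n) (x : Fin n → ℝ) : 0 ≤ sSup (gs x) :=
  gs_nonneg x (sSup_gs_mem hn x)

lemma le_sSup_gs (x : Fin n → ℝ) {t : ℝ} (ht : t ∈ gs x) : t ≤ sSup (gs x) :=
  le_csSup (gs_finite x).bddAbove ht

/-- every value of `x` is a value of the sorted tuple -/
lemma val_eq_sorted (x : Fin n → ℝ) (j : Fin n) :
    x j = (x ∘ Tuple.sort x) ((Tuple.sort x).symm j) := by
  simp

lemma gap_lower (hn : 2 ≤ n) (x : Fin n → ℝ) {a b : ℝ}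
    (hab : ∀ j, x j ≤ a ∨ b ≤ x j) (ha : ∃ j, x j ≤ a) (hb : ∃ j, b ≤ x j) :
    b - a ≤ sSup (gs x) := by
  rcases le_or_gt b a with h | h
  · linarith [sSup_gs_nonneg hn x]
  set y := x ∘ Tuple.sort x with hy
  have hmono : Monotone y := Tuple.monotone_sort x
  obtain ⟨ja, hja⟩ := ha
  obtain ⟨jb, hjb⟩ := hb
  set P : Finset (Fin n) := Finset.univ.filter (fun p => y p ≤ a) with hP
  have hPne : P.Nonempty := by
    refine ⟨(Tuple.sort x).symm ja, ?_⟩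
    simp only [hP, Finset.mem_filter, Finset.mem_univ, true_and]
    rw [hy, ← val_eq_sorted]
    exact hja
  set p := P.max' hPne with hp
  have hpmem : p ∈ P := P.max'_mem hPne
  have hpa : y p ≤ a := by simpa [hP] using hpmem
  set q := (Tuple.sort x).symm jb with hq
  have hqb : b ≤ y q := by rw [hy, ← val_eq_sorted]; exact hjb
  have hpq : p < q := by
    by_contra hle
    push_neg at hle
    have := hmono hle
    linarith
  have hp1 : (p : ℕ) + 1 < n := by
    have h2 : (p : ℕ) < (q : ℕ) := hpq
    omega
  have hnot : ¬ ((⟨(p : ℕ) + 1, hp1⟩ : Fin n) ∈ P) := by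
    intro hmem
    have := P.le_max' _ hmem
    rw [← hp] at this
    have : ((p : ℕ) + 1) ≤ (p : ℕ) := this
    omega
  have hya : a < y ⟨(p : ℕ) + 1, hp1⟩ := by
    by_contra hle
    push_neg at hle
    exact hnot (by simp [hP, hle])
  have hyb : b ≤ y ⟨(p : ℕ) + 1, hp1⟩ := by
    rcases hab (Tuple.sort x ⟨(p : ℕ) + 1, hp1⟩) with hl | hr
    · exfalso
      have : y ⟨(p : ℕ) + 1, hp1⟩ ≤ a := hl
      linarith
    · exact hr
  have hmem : y ⟨(p : ℕ) + 1, hp1⟩ - y p ∈ gs x := ⟨p, hp1, rfl⟩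
  have := le_sSup_gs x hmem
  linarith

lemma gap_attained (hn : 2 ≤ n) (x : Fin n → ℝ) :
    ∃ (a b : ℝ), sSup (gs x) = b - a ∧
      (∀ j, x j ≤ a ∨ b ≤ x j) ∧ (∃ j, x j = a) ∧ (∃ j, x j = b) := by
  obtain ⟨k, hk, heq⟩ := sSup_gs_mem hn x
  set y := x ∘ Tuple.sort x with hy
  have hmono : Monotone y := Tuple.monotone_sort x
  refine ⟨y k, y ⟨(k : ℕ) + 1, hk⟩, heq, ?_, ⟨Tuple.sort x k, rfl⟩,
    ⟨Tuple.sort x ⟨(k : ℕ) + 1, hk⟩, rfl⟩⟩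
  intro j
  have hxj : x j = y ((Tuple.sort x).symm j) := val_eq_sorted x j
  rcases le_or_gt ((Tuple.sort x).symm j) k with hm | hm
  · left; rw [hxj]; exact hmono hm
  · right; rw [hxj]
    apply hmono
    have : (k : ℕ) < ((Tuple.sort x).symm j : ℕ) := hm
    exact Fin.mk_le_of_le_val (by omega)

lemma gap_upper (hn : 2 ≤ n) (x : Fin n → ℝ) {B : ℝ} (hB : 0 ≤ B)
    (h : ∀ c e : ℝ, (∃ j, x j = c) → (∃ j, x j = e) → c < e →
         (∀ j, x j ≤ c ∨ e ≤ x j) → e - c ≤ B) :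
    sSup (gs x) ≤ B := by
  obtain ⟨a, b, heq, hsep, hac, hbc⟩ := gap_attained hn x
  rcases le_or_gt b a with hba | hba
  · rw [heq]; linarith
  · rw [heq]; exact h a b hac hbc hba hsep

lemma sum_bound_one (hn : 2 ≤ n) (f : Fin n → ℝ) (hf : ∀ i, 0 ≤ f i)
    (j0 : Fin n) (c : ℝ) (h : ∀ i, i ≠ j0 → c ≤ f i) :
    ((n : ℝ) - 1) * c ≤ ∑ i, f i := by
  have hsplit := Finset.add_sum_erase Finset.univ f (Finset.mem_univ j0)
  have hcard : (Finset.univ.erase j0).card = n - 1 := by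
    rw [Finset.card_erase_of_mem (Finset.mem_univ j0), Finset.card_univ, Fintype.card_fin]
  have hb : (Finset.univ.erase j0).card • c ≤ ∑ i ∈ Finset.univ.erase j0, f i :=
    Finset.card_nsmul_le_sum _ _ _ (fun i hi => h i (Finset.ne_of_mem_erase hi))
  rw [hcard, nsmul_eq_mul, Nat.cast_sub (by omega), Nat.cast_one] at hb
  have := hf j0
  linarith [hsplit ▸ le_refl (∑ i, f i), hb]

lemma sum_bound_two (hn : 2 ≤ n) (f : Fin n → ℝ) (j0 j1 : Fin n) (hj : j0 ≠ j1)
    (c0 c1 M : ℝ) (h0 : c0 ≤ f j0) (h1 : c1 ≤ f j1)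
    (h : ∀ i, i ≠ j0 → i ≠ j1 → M ≤ f i) :
    c0 + c1 + ((n : ℝ) - 2) * M ≤ ∑ i, f i := by
  have hj1 : j1 ∈ Finset.univ.erase j0 := Finset.mem_erase.2 ⟨hj.symm, Finset.mem_univ j1⟩
  have hsplit1 := Finset.add_sum_erase Finset.univ f (Finset.mem_univ j0)
  have hsplit2 := Finset.add_sum_erase (Finset.univ.erase j0) f hj1
  have hcard : ((Finset.univ.erase j0).erase j1).card = n - 2 := by
    rw [Finset.card_erase_of_mem hj1, Finset.card_erase_of_mem (Finset.mem_univ j0),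
      Finset.card_univ, Fintype.card_fin]
    omega
  have hb : ((Finset.univ.erase j0).erase j1).card • M
      ≤ ∑ i ∈ (Finset.univ.erase j0).erase j1, f i := by
    apply Finset.card_nsmul_le_sum
    intro i hi
    exact h i (Finset.ne_of_mem_erase (Finset.mem_of_mem_erase hi)) (Finset.ne_of_mem_erase hi)
  rw [hcard, nsmul_eq_mul, Nat.cast_sub (by omega)] at hb
  push_cast at hb
  linarith [hsplit1 ▸ le_refl (∑ i, f i), hsplit2, hb]

end LGD

/-- On `ℝ`, the map sending `(x₁,…,xₙ)` to the largest gap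
between consecutive values of the increasingly sorted tuple is an
`n`-distance whose best constant is `2/n`; equality holds with a
nonconstant tuple whenever `x₁ < x₂ = ⋯ = xₙ` and `z = (x₁+x₂)/2`. -/
theorem largest_gap_n_distance (n : ℕ) (hn : 2 ≤ n)
    (d : (Fin n → ℝ) → ℝ)
    (hd : ∀ x : Fin n → ℝ,
      d x = sSup {t : ℝ | ∃ i : Fin n, ∃ hi : (i : ℕ) + 1 < n,
        t = (x ∘ Tuple.sort x) ⟨(i : ℕ) + 1, hi⟩ - (x ∘ Tuple.sort x) i}) :
    (∀ x : Fin n → ℝ, 0 ≤ d x) ∧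
    (∀ x : Fin n → ℝ, d x = 0 ↔ ∀ i j : Fin n, x i = x j) ∧
    (∀ (x : Fin n → ℝ) (σ : Equiv.Perm (Fin n)), d (x ∘ σ) = d x) ∧
    (∀ (x : Fin n → ℝ) (z : ℝ),
      d x ≤ (2 / (n : ℝ)) * ∑ i : Fin n, d (Function.update x i z)) ∧
    (∀ (x : Fin n → ℝ) (z : ℝ),
      x ⟨0, by omega⟩ < x ⟨1, by omega⟩ →
      (∀ i : Fin n, i ≠ ⟨0, by omega⟩ → x i = x ⟨1, by omega⟩) →
      z = (x ⟨0, by omega⟩ + x ⟨1, by omega⟩) / 2 →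
      d x = (2 / (n : ℝ)) * ∑ i : Fin n, d (Function.update x i z)) := by
  have hd' : ∀ x : Fin n → ℝ, d x = sSup (LGD.gs x) := hd
  have hn2 : (2 : ℝ) ≤ (n : ℝ) := by exact_mod_cast hn
  have hn0 : (0 : ℝ) < (n : ℝ) := by linarith
  refine ⟨?_, ?_, ?_, ?_, ?_⟩
  · -- nonneg
    intro x
    rw [hd']
    exact LGD.sSup_gs_nonneg hn x
  · -- d x = 0 ↔ constant
    intro x
    constructor
    · intro h0 i j
      set y := x ∘ Tuple.sort x with hy
      have hmono : Monotone y := Tuple.monotone_sort x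
      have hgap : ∀ (i : Fin n) (hi : (i : ℕ) + 1 < n), y ⟨(i : ℕ) + 1, hi⟩ = y i := by
        intro i hi
        have h1 : y ⟨(i : ℕ) + 1, hi⟩ - y i ≤ sSup (LGD.gs x) :=
          LGD.le_sSup_gs x ⟨i, hi, rfl⟩
        rw [← hd' x, h0] at h1
        have h2 : y i ≤ y ⟨(i : ℕ) + 1, hi⟩ := hmono (by simp [Fin.le_def])
        linarith
      have hconst : ∀ (m : ℕ) (hm : m < n), y ⟨m, hm⟩ = y ⟨0, by omega⟩ := by
        intro m
        induction m with
        | zero => intro hm; rfl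
        | succ k ih =>
          intro hm
          have hk : k < n := by omega
          have := hgap ⟨k, hk⟩ hm
          rw [show (⟨k + 1, hm⟩ : Fin n) = ⟨((⟨k, hk⟩ : Fin n) : ℕ) + 1, hm⟩ from rfl, this,
            ih hk]
      have hx : ∀ i : Fin n, x i = y ⟨0, by omega⟩ := by
        intro i
        rw [LGD.val_eq_sorted x i]
        exact hconst _ _
      rw [hx i, hx j]
    · intro hc
      rw [hd' x]
      obtain ⟨k, hk, heq⟩ := LGD.sSup_gs_mem hn x
      rw [heq]
      exact sub_eq_zero_of_eq (hc _ _)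
  · -- permutation invariance
    intro x σ
    rw [hd', hd']
    congr 1
    unfold LGD.gs
    simp only [Tuple.comp_perm_comp_sort_eq_comp_sort]
  · -- simplex inequality
    intro x z
    have hterm : ∀ i : Fin n, 0 ≤ d (Function.update x i z) := fun i => by
      rw [hd']; exact LGD.sSup_gs_nonneg hn _
    obtain ⟨a, b, heq, hsep, ⟨ja, hja⟩, ⟨jb, hjb⟩⟩ := LGD.gap_attained hn x
    have hdx : d x = b - a := by rw [hd']; exact heq
    set S := ∑ i : Fin n, d (Function.update x i z) with hS
    have hS0 : 0 ≤ S := Finset.sum_nonneg fun i _ => hterm i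
    rcases le_or_gt b a with hba | hba
    · rw [hdx]
      have h2 : 0 ≤ 2 / (n : ℝ) * S := by positivity
      linarith
    have hjab : ja ≠ jb := by
      intro h
      rw [h, hjb] at hja
      linarith
    have hwi : ∀ i : Fin n, Function.update x i z i = z := fun i =>
      Function.update_self i z x
    have hw : ∀ (i j : Fin n), j ≠ i → Function.update x i z j = x j := fun i j h =>
      Function.update_of_ne h z x
    rw [hdx, div_mul_eq_mul_div, le_div_iff₀ hn0]
    rcases le_or_gt z a with hza | hza
    · -- z ≤ a : every i ≠ jb gives gap ≥ b - a
      have key : ∀ i : Fin n, i ≠ jb → b - a ≤ d (Function.update x i z) := by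
        intro i hi
        rw [hd']
        apply LGD.gap_lower hn
        · intro j
          by_cases hj : j = i
          · left; rw [hj, hwi]; exact hza
          · rw [hw i j hj]; exact hsep j
        · exact ⟨i, by rw [hwi]; exact hza⟩
        · refine ⟨jb, ?_⟩
          rw [hw i jb (fun h => hi h.symm)]
          rw [hjb]
      have hsum : ((n : ℝ) - 1) * (b - a) ≤ S :=
        LGD.sum_bound_one hn _ hterm jb _ key
      have hint : 0 ≤ ((n : ℝ) - 2) * (b - a) := by
        apply mul_nonneg <;> linarith
      linarith
    rcases le_or_gt b z with hbz | hbz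
    · -- b ≤ z
      have key : ∀ i : Fin n, i ≠ ja → b - a ≤ d (Function.update x i z) := by
        intro i hi
        rw [hd']
        apply LGD.gap_lower hn
        · intro j
          by_cases hj : j = i
          · right; rw [hj, hwi]; exact hbz
          · rw [hw i j hj]; exact hsep j
        · refine ⟨ja, ?_⟩
          rw [hw i ja (fun h => hi h.symm), hja]
        · exact ⟨i, by rw [hwi]; exact hbz⟩
      have hsum : ((n : ℝ) - 1) * (b - a) ≤ S :=
        LGD.sum_bound_one hn _ hterm ja _ key
      have hint : 0 ≤ ((n : ℝ) - 2) * (b - a) := by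
        apply mul_nonneg <;> linarith
      linarith
    · -- a < z < b
      have keyL : ∀ i : Fin n, i ≠ ja → z - a ≤ d (Function.update x i z) := by
        intro i hi
        rw [hd']
        apply LGD.gap_lower hn
        · intro j
          by_cases hj : j = i
          · right; rw [hj, hwi]
          · rw [hw i j hj]
            rcases hsep j with h | h
            · left; exact h
            · right; linarith
        · refine ⟨ja, ?_⟩
          rw [hw i ja (fun h => hi h.symm), hja]
        · exact ⟨i, by rw [hwi]⟩
      have keyR : ∀ i : Fin n, i ≠ jb → b - z ≤ d (Function.update x i z) := by
        intro i hi
        rw [hd']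
        apply LGD.gap_lower hn
        · intro j
          by_cases hj : j = i
          · left; rw [hj, hwi]
          · rw [hw i j hj]
            rcases hsep j with h | h
            · left; linarith
            · right; exact h
        · exact ⟨i, by rw [hwi]⟩
        · refine ⟨jb, ?_⟩
          rw [hw i jb (fun h => hi h.symm), hjb]
      set M := max (z - a) (b - z) with hM
      have hsum : (b - z) + (z - a) + ((n : ℝ) - 2) * M ≤ S := by
        apply LGD.sum_bound_two hn _ ja jb hjab
        · exact keyR ja hjab
        · exact keyL jb (fun h => hjab h.symm)
        · intro i hi1 hi2
          exact max_le (keyL i hi1) (keyR i hi2)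
      have hM1 : z - a ≤ M := le_max_left _ _
      have hM2 : b - z ≤ M := le_max_right _ _
      have hint : 0 ≤ ((n : ℝ) - 2) * (2 * M - (b - a)) := by
        apply mul_nonneg <;> linarith
      linarith
  · -- equality case
    intro x z h01 hrest hz
    set i0 : Fin n := ⟨0, by omega⟩ with hi0
    set i1 : Fin n := ⟨1, by omega⟩ with hi1
    set α := x i0 with hα
    set β := x i1 with hβ
    have hαβ : α < β := h01
    have hval : ∀ j, x j = α ∨ x j = β := by
      intro j
      by_cases hj : j = i0
      · left; rw [hj]
      · right; exact hrest j hj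
    have hz1 : z - α = (β - α) / 2 := by rw [hz]; ring
    have hz2 : β - z = (β - α) / 2 := by rw [hz]; ring
    have hαz : α < z := by linarith
    have hzβ : z < β := by linarith
    have hdx : d x = β - α := by
      rw [hd']
      apply le_antisymm
      · apply LGD.gap_upper hn x (by linarith)
        intro c e hc he hce hsep
        obtain ⟨jc, hjc⟩ := hc
        obtain ⟨je, hje⟩ := he
        have hc' : c = α ∨ c = β := by
          rcases hval jc with h | h
          · left; rw [← hjc, h]
          · right; rw [← hjc, h]
        have he' : e = α ∨ e = β := by
          rcases hval je with h | h
          · left; rw [← hje, h]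
          · right; rw [← hje, h]
        rcases hc' with rfl | rfl <;> rcases he' with rfl | rfl <;> linarith
      · apply LGD.gap_lower hn x (a := α) (b := β)
        · intro j
          rcases hval j with h | h
          · left; rw [h]
          · right; rw [h]
        · exact ⟨i0, le_refl _⟩
        · exact ⟨i1, le_refl _⟩
    have hterm : ∀ i : Fin n, d (Function.update x i z) = (β - α) / 2 := by
      intro i
      rw [hd']
      have hwi : Function.update x i z i = z := Function.update_self i z x
      have hw : ∀ j, j ≠ i → Function.update x i z j = x j := fun j h =>
        Function.update_of_ne h z x
      apply le_antisymm
      · apply LGD.gap_upper hn _ (by linarith)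
        intro c e hc he hce hsep
        obtain ⟨jc, hjc⟩ := hc
        obtain ⟨je, hje⟩ := he
        have hc' : c = α ∨ c = z ∨ c = β := by
          by_cases h : jc = i
          · right; left; rw [← hjc, h, hwi]
          · rw [← hjc, hw jc h]
            rcases hval jc with h' | h'
            · left; exact h'
            · right; right; exact h'
        have he' : e = α ∨ e = z ∨ e = β := by
          by_cases h : je = i
          · right; left; rw [← hje, h, hwi]
          · rw [← hje, hw je h]
            rcases hval je with h' | h'
            · left; exact h'
            · right; right; exact h'
        rcases hc' with rfl | rfl | rfl <;> rcases he' with rfl | rfl | rfl <;>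
          first
          | linarith
          | (rcases hsep i with h | h <;> rw [hwi] at h <;> linarith)
      · by_cases h : i = i0
        · -- i = i0 : use pair (z, β)
          have hlow := LGD.gap_lower hn (Function.update x i z) (a := z) (b := β)
            (by
              intro j
              by_cases hj : j = i
              · left; rw [hj, hwi]
              · rw [hw j hj]
                right
                rw [hrest j (by rw [← h]; exact hj)]
            )
            ⟨i, by rw [hwi]⟩
            ⟨i1, by
              rw [hw i1 (by rw [h]; exact fun he => absurd he (by simp [hi0, hi1, Fin.ext_iff]))]⟩
          linarith
        · -- i ≠ i0 : use pair (α, z)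
          have hlow := LGD.gap_lower hn (Function.update x i z) (a := α) (b := z)
            (by
              intro j
              by_cases hj : j = i
              · right; rw [hj, hwi]
              · rw [hw j hj]
                rcases hval j with h' | h'
                · left; rw [h']
                · right; rw [h']; linarith
            )
            ⟨i0, by rw [hw i0 (fun he => h he.symm)]⟩
            ⟨i, by rw [hwi]⟩
          linarith
    have hsum : ∑ i : Fin n, d (Function.update x i z) = (n : ℝ) * ((β - α) / 2) := by
      rw [Finset.sum_congr rfl (fun i _ => hterm i), Finset.sum_const, Finset.card_univ,
        Fintype.card_fin, nsmul_eq_mul]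
    rw [hdx, hsum]
    have hne : (n : ℝ) ≠ 0 := ne_of_gt hn0
    field_simp
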